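/- On the 5-dimensional nilpotent Lie algebra g = ℝ⁵ with the standard inner product, the function f₂(x) = x₂x₄ - ½x₃² is invariant under the transadjoint action: its gradient ∇f₂(x) = x₄e₂ - x₃e₃ + x₂e₄ satisfies ad^t_{∇f₂(x)} x = 0 for all x ∈ ℝ⁵. -/

import Mathlib

/-- The transadjoint action `ad^t_X Y` on the 5-dimensional nilpotent Lie algebra with
brackets `[e₁,e₂]=e₃`, `[e₁,e₃]=e₄`, `[e₅,e₁]=e₂`, `[e₅,e₂]=e₃`, `[e₅,e₃]=e₄`,
with respect to the standard inner product on `ℝ⁵`. -/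
def adt5 (X Y : Fin 5 → ℝ) : Fin 5 → ℝ :=
  ![X 4 * Y 1 - X 2 * Y 3 - X 1 * Y 2,
    (X 0 + X 4) * Y 2,
    (X 0 + X 4) * Y 3,
    0,
    -(X 0 * Y 1 + X 2 * Y 3 + X 1 * Y 2)]

/-- `f₂(x) = x₂x₄ - ½x₃²`. -/
noncomputable def f2fun (x : Fin 5 → ℝ) : ℝ := x 1 * x 3 - x 2 ^ 2 / 2

/-- `∇f₂(x) = x₄e₂ - x₃e₃ + x₂e₄`. -/
def gradf2 (x : Fin 5 → ℝ) : Fin 5 → ℝ := ![0, x 3, -x 2, x 1, 0]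

lemma hasFDerivAt_f2fun (x : Fin 5 → ℝ) :
    HasFDerivAt f2fun
      ((x 3) • (ContinuousLinearMap.proj 1 : (Fin 5 → ℝ) →L[ℝ] ℝ)
        + (x 1) • (ContinuousLinearMap.proj 3 : (Fin 5 → ℝ) →L[ℝ] ℝ)
        - (x 2) • (ContinuousLinearMap.proj 2 : (Fin 5 → ℝ) →L[ℝ] ℝ)) x := by
  have h1 : HasFDerivAt (fun v : Fin 5 → ℝ => v 1)
      (ContinuousLinearMap.proj 1 : (Fin 5 → ℝ) →L[ℝ] ℝ) x := hasFDerivAt_apply 1 x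
  have h3 : HasFDerivAt (fun v : Fin 5 → ℝ => v 3)
      (ContinuousLinearMap.proj 3 : (Fin 5 → ℝ) →L[ℝ] ℝ) x := hasFDerivAt_apply 3 x
  have h2 : HasFDerivAt (fun v : Fin 5 → ℝ => v 2)
      (ContinuousLinearMap.proj 2 : (Fin 5 → ℝ) →L[ℝ] ℝ) x := hasFDerivAt_apply 2 x
  have := ((h1.mul h3).sub ((h2.mul h2).const_mul (1/2)))
  convert this using 1
  · rfl
  · rfl
  · rfl
  · rfl
  · rfl
  · ext v; simp [f2fun, sq]; ring
  · ext y
    simp only [ContinuousLinearMap.sub_apply, ContinuousLinearMap.add_apply,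
      ContinuousLinearMap.smul_apply, ContinuousLinearMap.proj_apply, smul_eq_mul]
    ring

/-- `gradf2` is the gradient of `f₂` with respect to the standard inner product, and
`f₂` is invariant under the transadjoint action: `ad^t_{∇f₂(x)} x = 0` for all `x`. -/
theorem stmt_13 : ∀ x : Fin 5 → ℝ,
    (∀ y : Fin 5 → ℝ, ∑ i, gradf2 x i * y i = fderiv ℝ f2fun x y) ∧
    adt5 (gradf2 x) x = 0 := by
  intro x
  constructor
  · intro y
    rw [(hasFDerivAt_f2fun x).fderiv]
    simp [gradf2, Fin.sum_univ_five]
    ring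
  · funext i
    fin_cases i <;> simp [adt5, gradf2] <;> ring
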